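/- Let G be a hypergraph, A ⊆ E(G), k an integer, and (B1,B2) a minimal non-k-well-linkedness witness for A. Then both E(G) \ B1 and E(G) \ B2 are linked into Ā. -/
import Mathlib


open Finset

variable {V E : Type} [Fintype V] [DecidableEq V] [Fintype E] [DecidableEq E]

/-- `V(A)`: the union of the vertex sets of the hyperedges in `A`. -/
def hVerts (inc : E → Finset V) (A : Finset E) : Finset V :=
  A.biUnion inc

/-- The border `bd(A) = V(A) ∩ V(Ā)` of a set of hyperedges. -/
def hBd (inc : E → Finset V) (A : Finset E) : Finset V :=
  hVerts inc A ∩ hVerts inc Aᶜ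

/-- The order function `λ(A) = |bd(A)|`. -/
def hLam (inc : E → Finset V) (A : Finset E) : ℕ :=
  (hBd inc A).card

/-- `B` is linked into `A`: every `X` with `A ⊆ X ⊆ B` has `λ(X) ≥ λ(B)`. -/
def LinkedInto (inc : E → Finset V) (A B : Finset E) : Prop :=
  ∀ X : Finset E, A ⊆ X → X ⊆ B → hLam inc B ≤ hLam inc X

/-- `(B1, B2)` is a non-`k`-well-linkedness witness for `A`: a bipartition of `A` with
`λ(B1) < min (λ(A), k)` and `λ(B2) < λ(A)`. -/
def NonKWLWitness (inc : E → Finset V) (k : ℕ) (A B1 B2 : Finset E) : Prop :=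
  Disjoint B1 B2 ∧ B1 ∪ B2 = A ∧
    hLam inc B1 < min (hLam inc A) k ∧ hLam inc B2 < hLam inc A

set_option linter.unusedSectionVars false

lemma hVerts_union (inc : E → Finset V) (s t : Finset E) :
    hVerts inc (s ∪ t) = hVerts inc s ∪ hVerts inc t := by
  ext v; simp [hVerts, Finset.mem_biUnion, Finset.mem_union, or_and_right, exists_or]

lemma hVerts_mono (inc : E → Finset V) {s t : Finset E} (h : s ⊆ t) :
    hVerts inc s ⊆ hVerts inc t := Finset.biUnion_subset_biUnion_of_subset_left inc h

lemma hLam_compl (inc : E → Finset V) (S : Finset E) : hLam inc Sᶜ = hLam inc S := by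
  unfold hLam hBd
  rw [compl_compl, inter_comm]

lemma hLam_submodular (inc : E → Finset V) (A B : Finset E) :
    hLam inc (A ∩ B) + hLam inc (A ∪ B) ≤ hLam inc A + hLam inc B := by
  have hcard : ∀ s : Finset V, s.card = ∑ v, (if v ∈ s then 1 else 0) := by
    intro s; simp [Finset.sum_ite_mem]
  unfold hLam
  rw [hcard, hcard, hcard, hcard, ← Finset.sum_add_distrib, ← Finset.sum_add_distrib]
  apply Finset.sum_le_sum
  intro v _
  have hmemBd : ∀ S : Finset E, (v ∈ hBd inc S ↔ v ∈ hVerts inc S ∧ v ∈ hVerts inc Sᶜ) := by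
    intro S; exact Finset.mem_inter
  have h1 : v ∈ hBd inc (A ∩ B) ↔
      v ∈ hVerts inc (A ∩ B) ∧ (v ∈ hVerts inc Aᶜ ∨ v ∈ hVerts inc Bᶜ) := by
    rw [hmemBd, Finset.compl_inter, hVerts_union, Finset.mem_union]
  have h2 : v ∈ hBd inc (A ∪ B) ↔
      (v ∈ hVerts inc A ∨ v ∈ hVerts inc B) ∧ v ∈ hVerts inc (Aᶜ ∩ Bᶜ) := by
    rw [hmemBd, Finset.compl_union, hVerts_union, Finset.mem_union]
  have hi : v ∈ hVerts inc (A ∩ B) → v ∈ hVerts inc A ∧ v ∈ hVerts inc B :=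
    fun h => ⟨hVerts_mono inc inter_subset_left h, hVerts_mono inc inter_subset_right h⟩
  have hj : v ∈ hVerts inc (Aᶜ ∩ Bᶜ) → v ∈ hVerts inc Aᶜ ∧ v ∈ hVerts inc Bᶜ :=
    fun h => ⟨hVerts_mono inc inter_subset_left h, hVerts_mono inc inter_subset_right h⟩
  simp only [h1, h2, hmemBd A, hmemBd B]
  by_cases ha : v ∈ hVerts inc A <;> by_cases ha' : v ∈ hVerts inc Aᶜ <;>
    by_cases hb : v ∈ hVerts inc B <;> by_cases hb' : v ∈ hVerts inc Bᶜ <;>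
    by_cases hI : v ∈ hVerts inc (A ∩ B) <;> by_cases hJ : v ∈ hVerts inc (Aᶜ ∩ Bᶜ) <;>
    simp_all


/-- If `(B1, B2)` is a minimal non-`k`-well-linkedness witness for `A` (minimizing
`λ(B1) + λ(B2)` among all such witnesses), then both `E(G) \ B1` and `E(G) \ B2` are
linked into `Ā`. -/
theorem minimal_witness_linked (inc : E → Finset V)
    (hcov : ∀ v : V, ∃ e : E, v ∈ inc e) (k : ℕ)
    (A B1 B2 : Finset E)
    (hwit : NonKWLWitness inc k A B1 B2)
    (hmin : ∀ C1 C2 : Finset E, NonKWLWitness inc k A C1 C2 →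
      hLam inc B1 + hLam inc B2 ≤ hLam inc C1 + hLam inc C2) :
    LinkedInto inc Aᶜ B1ᶜ ∧ LinkedInto inc Aᶜ B2ᶜ := by
  obtain ⟨hdisj, huni, hl1, hl2⟩ := hwit
  constructor
  · intro X hAX hXB
    by_contra hcon
    push_neg at hcon
    rw [hLam_compl] at hcon
    -- B2 ∪ X = B1ᶜ
    have hBU : B2 ∪ X = B1ᶜ := by
      ext v
      simp only [Finset.mem_union, Finset.mem_compl]
      constructor
      · rintro (h | h)
        · exact fun hB1 => Finset.disjoint_left.mp hdisj hB1 h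
        · intro hB1
          have := hXB h
          simp only [Finset.mem_compl] at this
          exact this hB1
      · intro h
        by_cases hA : v ∈ A
        · left
          have hvu : v ∈ B1 ∪ B2 := by rw [huni]; exact hA
          rcases Finset.mem_union.mp hvu with h' | h'
          · exact absurd h' h
          · exact h'
        · right; exact hAX (Finset.mem_compl.mpr hA)
    have hsub := hLam_submodular inc B2 X
    rw [hBU, hLam_compl] at hsub
    have hC2 : hLam inc (B2 ∩ X) < hLam inc B2 := by omega
    -- the new witness (Xᶜ, B2 ∩ X)
    have hw : NonKWLWitness inc k A Xᶜ (B2 ∩ X) := by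
      refine ⟨?_, ?_, ?_, ?_⟩
      · rw [Finset.disjoint_left]
        intro v hv hv'
        exact (Finset.mem_compl.mp hv) (Finset.mem_inter.mp hv').2
      · ext v
        simp only [Finset.mem_union, Finset.mem_compl, Finset.mem_inter]
        constructor
        · rintro (h | ⟨h, _⟩)
          · by_contra hA
            exact h (hAX (Finset.mem_compl.mpr hA))
          · rw [← huni]; exact Finset.mem_union_right _ h
        · intro hA
          by_cases hX : v ∈ X
          · right
            refine ⟨?_, hX⟩
            have hvu : v ∈ B1 ∪ B2 := by rw [huni]; exact hA
            rcases Finset.mem_union.mp hvu with h' | h'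
            · have := hXB hX
              simp only [Finset.mem_compl] at this
              exact absurd h' this
            · exact h'
          · left; exact hX
      · rw [hLam_compl]; omega
      · omega
    have := hmin _ _ hw
    rw [hLam_compl] at this
    omega
  · intro X hAX hXB
    by_contra hcon
    push_neg at hcon
    rw [hLam_compl] at hcon
    have hBU : B1 ∪ X = B2ᶜ := by
      ext v
      simp only [Finset.mem_union, Finset.mem_compl]
      constructor
      · rintro (h | h)
        · exact Finset.disjoint_left.mp hdisj h
        · intro hB2
          have := hXB h
          simp only [Finset.mem_compl] at this
          exact this hB2
      · intro h
        by_cases hA : v ∈ A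
        · left
          have hvu : v ∈ B1 ∪ B2 := by rw [huni]; exact hA
          rcases Finset.mem_union.mp hvu with h' | h'
          · exact h'
          · exact absurd h' h
        · right; exact hAX (Finset.mem_compl.mpr hA)
    have hsub := hLam_submodular inc B1 X
    rw [hBU, hLam_compl] at hsub
    have hC1 : hLam inc (B1 ∩ X) < hLam inc B1 := by omega
    have hw : NonKWLWitness inc k A (B1 ∩ X) Xᶜ := by
      refine ⟨?_, ?_, ?_, ?_⟩
      · rw [Finset.disjoint_left]
        intro v hv hv'
        exact (Finset.mem_compl.mp hv') (Finset.mem_inter.mp hv).2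
      · ext v
        simp only [Finset.mem_union, Finset.mem_compl, Finset.mem_inter]
        constructor
        · rintro (⟨h, _⟩ | h)
          · rw [← huni]; exact Finset.mem_union_left _ h
          · by_contra hA
            exact h (hAX (Finset.mem_compl.mpr hA))
        · intro hA
          by_cases hX : v ∈ X
          · left
            refine ⟨?_, hX⟩
            have hvu : v ∈ B1 ∪ B2 := by rw [huni]; exact hA
            rcases Finset.mem_union.mp hvu with h' | h'
            · exact h'
            · have := hXB hX
              simp only [Finset.mem_compl] at this
              exact absurd h' this
          · right; exact hX
      · omega
      · rw [hLam_compl]; omega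
    have := hmin _ _ hw
    rw [hLam_compl] at this
    omega
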